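/- The polytope Q+ ⊂ ℝ^4 has exactly 32 facets, given by the inequalities ±5x1 ± x2 ± 2x3 ± x4 ≤ 90 and ±x1 ± 5x2 ± x3 ± 2x4 ≤ 90 (all sign choices independent): each of these 32 inequalities is valid on Q+ and holds with equality on a 3-dimensional face, Q+ is exactly the set of points of ℝ^4 satisfying all 32 inequalities, and the symmetry group of Q+ generated by the sign changes of the four coordinates and the simultaneous transpositions x1 ↔ x2, x3 ↔ x4 acts transitively on these 32 facets. -/

import Mathlib

open scoped Pointwise

variable {V : Type*} [AddCommGroup V] [Module ℝ V]

/-- A polytope is the convex hull of a finite set of points. -/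
def IsPolytope (P : Set V) : Prop :=
  ∃ S : Set V, S.Finite ∧ P = convexHull ℝ S

/-- The dimension of a set: the dimension of its affine span. -/
noncomputable def adim (P : Set V) : ℕ :=
  Module.finrank ℝ (vectorSpan ℝ P)

/-- A face of a polytope: the set of maximizers over it of some linear functional. -/
def IsFaceOf (F P : Set V) : Prop :=
  ∃ l : V →ₗ[ℝ] ℝ, F = {x ∈ P | ∀ y ∈ P, l y ≤ l x}

/-- A vertex: a point whose singleton is a face. -/
def IsVertexOf (x : V) (P : Set V) : Prop := IsFaceOf {x} P

/-- A facet: a face of dimension `dim P - 1`. -/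
def IsFacetOf (F P : Set V) : Prop := IsFaceOf F P ∧ adim F + 1 = adim P

/-- A ridge: a face of dimension `dim P - 2`. -/
def IsRidgeOf (F P : Set V) : Prop := IsFaceOf F P ∧ adim F + 2 = adim P

def vertexSet (P : Set V) : Set V := {x | IsVertexOf x P}

/-- The graph of a polytope: vertices are its vertices, adjacency means being
the two endpoints of an edge (a one-dimensional face, i.e. the segment between
them is a face). -/
def polyGraph (P : Set V) : SimpleGraph V where
  Adj x y := x ≠ y ∧ IsVertexOf x P ∧ IsVertexOf y P ∧ IsFaceOf (segment ℝ x y) P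
  symm := by
    constructor
    rintro x y ⟨hxy, hx, hy, hseg⟩
    exact ⟨hxy.symm, hy, hx, by rwa [segment_symm]⟩
  loopless := by constructor; rintro x ⟨h, -⟩; exact h rfl

/-- Graph distance between two vertices of a polytope. -/
noncomputable def vertexDist (P : Set V) (x y : V) : ℕ := (polyGraph P).dist x y

/-- The combinatorial diameter of a polytope: the diameter of its graph. -/
noncomputable def polyDiam (P : Set V) : ℕ :=
  sSup {n | ∃ x y, IsVertexOf x P ∧ IsVertexOf y P ∧ vertexDist P x y = n}

noncomputable def numFacets (P : Set V) : ℕ := {F | IsFacetOf F P}.ncard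

noncomputable def numVertices (P : Set V) : ℕ := (vertexSet P).ncard

/-- The dual graph of a polytope: nodes are its facets, two facets adjacent iff
their intersection is a ridge. -/
def dualGraph (P : Set V) : SimpleGraph (Set V) where
  Adj F F' := F ≠ F' ∧ IsFacetOf F P ∧ IsFacetOf F' P ∧ IsRidgeOf (F ∩ F') P
  symm := by
    constructor
    rintro F F' ⟨hne, hF, hF', hr⟩
    exact ⟨hne.symm, hF', hF, by rwa [Set.inter_comm]⟩
  loopless := by constructor; rintro F ⟨h, -⟩; exact h rfl

/-- Dual distance between two facets. -/
noncomputable def dualDist (P F F' : Set V) : ℕ := (dualGraph P).dist F F'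

/-- The dual diameter of a polytope. -/
noncomputable def dualDiam (P : Set V) : ℕ :=
  sSup {n | ∃ F F', IsFacetOf F P ∧ IsFacetOf F' P ∧ dualDist P F F' = n}

/-- `Hdiam n d` : the maximum combinatorial diameter of a `d`-dimensional
polytope with `n` facets. -/
noncomputable def Hdiam (n d : ℕ) : ℕ :=
  sSup {δ | ∃ (N : ℕ) (P : Set (Fin N → ℝ)),
    IsPolytope P ∧ adim P = d ∧ numFacets P = n ∧ polyDiam P = δ}

/-- A spindle: a polytope with two distinguished vertices `u`, `v` such that
every facet contains exactly one of them. -/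
structure IsSpindle (P : Set V) (u v : V) : Prop where
  poly : IsPolytope P
  vert_u : IsVertexOf u P
  vert_v : IsVertexOf v P
  facet_cond : ∀ F, IsFacetOf F P → (u ∈ F ↔ v ∉ F)

/-- A prismatoid: a polytope with two designated parallel facets containing all
of its vertices. -/
structure IsPrismatoid (Q Qp Qm : Set V) : Prop where
  poly : IsPolytope Q
  facet_p : IsFacetOf Qp Q
  facet_m : IsFacetOf Qm Q
  parallel : ∃ (l : V →ₗ[ℝ] ℝ) (c₁ c₂ : ℝ), l ≠ 0 ∧ c₁ ≠ c₂ ∧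
    (∀ x ∈ Qp, l x = c₁) ∧ (∀ x ∈ Qm, l x = c₂)
  verts : vertexSet Q ⊆ Qp ∪ Qm

/-- A polytope is simplicial if every facet has exactly `dim P` vertices. -/
def IsSimplicial (P : Set V) : Prop :=
  ∀ F, IsFacetOf F P → (vertexSet F).ncard = adim P

/-- A polytope is simple if every vertex lies in exactly `dim P` facets. -/
def IsSimple (P : Set V) : Prop :=
  ∀ x, IsVertexOf x P → {F | IsFacetOf F P ∧ x ∈ F}.ncard = adim P

def Sgn : Set ℝ := {1, -1}

/-- The 24 vertices of `Q⁺ ⊂ ℝ⁴`. -/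
def QplusPts : Set (Fin 4 → ℝ) :=
  {x | ∃ a ∈ Sgn, ∃ b ∈ Sgn,
    x = ![a * 18, 0, 0, 0] ∨ x = ![0, a * 18, 0, 0] ∨
    x = ![0, 0, a * 45, 0] ∨ x = ![0, 0, 0, a * 45] ∨
    x = ![a * 15, b * 15, 0, 0] ∨ x = ![0, 0, a * 30, b * 30] ∨
    x = ![0, a * 10, b * 40, 0] ∨ x = ![a * 10, 0, 0, b * 40]}

noncomputable def Qplus4 : Set (Fin 4 → ℝ) := convexHull ℝ QplusPts

/-- The 32 outer facet normals `(±5,±1,±2,±1)`, `(±1,±5,±1,±2)` of `Q⁺`. -/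
def Wplus : Set (Fin 4 → ℝ) :=
  {w | ∃ e : Fin 4 → ℝ, (∀ i, e i = 1 ∨ e i = -1) ∧
    (w = ![5 * e 0, e 1, 2 * e 2, e 3] ∨ w = ![e 0, 5 * e 1, e 2, 2 * e 3])}

/-- The index permutation swapping `x₁ ↔ x₂` and `x₃ ↔ x₄`. -/
def swapIdx : Fin 4 → Fin 4 := ![1, 0, 3, 2]

/-- The symmetry group of `Q⁺`: maps generated by the sign changes of the four
coordinates together with the simultaneous transpositions `x₁ ↔ x₂`,
`x₃ ↔ x₄`. -/
def SymGrp : Set ((Fin 4 → ℝ) → (Fin 4 → ℝ)) :=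
  {T | ∃ (s : Fin 4 → ℝ) (sw : Bool), (∀ i, s i = 1 ∨ s i = -1) ∧
    T = fun x i => s i * x (if sw then swapIdx i else i)}

open Filter Topology Module

/-!
The 32 inequalities hold at the 24 vertices, hence on `Q⁺`. Conversely, flipping signs moves a
solution into the nonnegative orthant, where the two inequalities with all signs `+` and the
coordinate inequalities cut out a polytope `Kpos`. By Krein–Milman it is the hull of its extreme
points, and perturbing an extreme point along directions that keep its tight inequalities tight
shows that it has at most as many nonzero coordinates as tight inequalities; this leaves the nine
points `0`, `18e₁`, `18e₂`, `45e₃`, `45e₄`, `(15,15,0,0)`, `(0,0,30,30)`, `(0,10,40,0)`,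
`(10,0,0,40)`, whose sign changes all lie in `Q⁺`.

The signed permutations act transitively on the normals `W`, all of squared length 31, so
`w ⬝ᵥ w' < 31` for `w ≠ w'`: the point `(90/31) w` lies on the face cut out by `w` and on no
other, which makes these 32 faces distinct, and each is a copy of the face of `(5,1,2,1)`, which
contains four affinely independent vertices. Finally, a proper face of a polytope given by
finitely many inequalities lies in one of their hyperplanes, and a face of dimension 3 inside a
facet is that facet.
-/

lemma mul_eq_one_or_neg_one {a b : ℝ} (ha : a = 1 ∨ a = -1) (hb : b = 1 ∨ b = -1) :
    a * b = 1 ∨ a * b = -1 := by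
  rcases ha with rfl | rfl <;> rcases hb with rfl | rfl <;> norm_num

lemma exists_forall_ne_eq_zero_of_mul_eq_zero {ι M₀ : Type*} [Nonempty ι] [MulZeroClass M₀]
    [NoZeroDivisors M₀] {f : ι → M₀} (h : ∀ i j, i ≠ j → f i * f j = 0) :
    ∃ i, ∀ j, j ≠ i → f j = 0 := by
  by_cases hz : ∀ i, f i = 0
  · exact ⟨Classical.arbitrary ι, fun j _ => hz j⟩
  · obtain ⟨i, hi⟩ := not_forall.1 hz
    exact ⟨i, fun j hj => (mul_eq_zero.1 (h i j hj.symm)).resolve_left hi⟩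

lemma eq_vecCons_four {α : Type*} {y : Fin 4 → α} {a b c d : α} (h0 : y 0 = a) (h1 : y 1 = b)
    (h2 : y 2 = c) (h3 : y 3 = d) : y = ![a, b, c, d] := by
  ext i; fin_cases i <;> assumption

section ConvexGeometry

lemma eventually_add_mul_le {a b c : ℝ} (hab : a ≤ b) (hc : a = b → c = 0) :
    ∀ᶠ ε in 𝓝 (0 : ℝ), a + ε * c ≤ b := by
  rcases hab.eq_or_lt with rfl | hlt
  · exact .of_forall fun ε => by simp [hc rfl]
  · have : Tendsto (fun ε : ℝ => a + ε * c) (𝓝 0) (𝓝 a) := by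
      simpa using (by fun_prop : Continuous fun ε : ℝ => a + ε * c).tendsto 0
    exact (this.eventually (eventually_lt_nhds hlt)).mono fun _ => le_of_lt

lemma eq_zero_of_eventually_add_smul_mem {S : Set V} {y d : V} (hy : y ∈ S.extremePoints ℝ)
    (h : ∀ᶠ ε in 𝓝 (0 : ℝ), y + ε • d ∈ S) : d = 0 := by
  have hneg : ∀ᶠ ε in 𝓝 (0 : ℝ), y + (-ε) • d ∈ S :=
    (continuous_neg.tendsto' (0 : ℝ) 0 neg_zero).eventually h
  obtain ⟨ε, ⟨hplus, hminus⟩, hε⟩ :=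
    (((h.and hneg).filter_mono nhdsWithin_le_nhds).and (self_mem_nhdsWithin (s := {0}ᶜ))).exists
  have hmid : y ∈ openSegment ℝ (y + ε • d) (y + (-ε) • d) :=
    ⟨1 / 2, 1 / 2, by norm_num, by norm_num, by norm_num, by module⟩
  have := hy.2 hplus hminus hmid
  simpa [show ε ≠ 0 from hε] using this

lemma isFaceOf_setOf_eq {P : Set V} (l : V →ₗ[ℝ] ℝ) {c : ℝ} (hle : ∀ x ∈ P, l x ≤ c) {x₀ : V}
    (hx₀ : x₀ ∈ P) (hc : l x₀ = c) : IsFaceOf {x ∈ P | l x = c} P := by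
  refine ⟨l, Set.ext fun x => and_congr_right fun hx => ⟨fun h y hy => h ▸ hle y hy, fun h => ?_⟩⟩
  exact le_antisymm (hle x hx) (hc ▸ h x₀ hx₀)

lemma IsFaceOf.subset {F P : Set V} (hF : IsFaceOf F P) : F ⊆ P := by
  obtain ⟨l, rfl⟩ := hF
  exact Set.sep_subset _ _

lemma IsFaceOf.convex {F P : Set V} (hF : IsFaceOf F P) (hP : Convex ℝ P) : Convex ℝ F := by
  obtain ⟨l, rfl⟩ := hF
  intro x hx y hy a b ha hb hab
  refine ⟨hP hx.1 hy.1 ha hb hab, fun z hz => ?_⟩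
  simp only [map_add, map_smul, smul_eq_mul]
  have hz' : l z = a * l z + b * l z := by rw [← add_mul, hab, one_mul]
  linarith [mul_le_mul_of_nonneg_left (hx.2 z hz) ha, mul_le_mul_of_nonneg_left (hy.2 z hz) hb]

lemma vectorSpan_le_ker {S : Set V} {l : V →ₗ[ℝ] ℝ} {c : ℝ} (h : ∀ x ∈ S, l x = c) :
    vectorSpan ℝ S ≤ LinearMap.ker l := by
  rw [vectorSpan_def, Submodule.span_le]
  rintro _ ⟨a, ha, b, hb, rfl⟩
  simp [h a ha, h b hb]

lemma adim_lt_finrank [FiniteDimensional ℝ V] {S : Set V} {l : V →ₗ[ℝ] ℝ} (hl : l ≠ 0) {c : ℝ}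
    (h : ∀ x ∈ S, l x = c) : adim S < finrank ℝ V := by
  rw [← Module.Dual.finrank_ker_add_one_of_ne_zero hl]
  exact Nat.lt_succ_of_le (Submodule.finrank_mono (vectorSpan_le_ker h))

lemma adim_image_of_injective {W : Type*} [AddCommGroup W] [Module ℝ W] (f : V →ₗ[ℝ] W)
    (hf : Function.Injective f) (S : Set V) : adim (f '' S) = adim S := by
  rw [adim, adim, ← f.coe_toAffineMap, ← AffineMap.map_vectorSpan, f.toAffineMap_linear]
  exact (Submodule.equivMapOfInjective f hf _).finrank_eq.symm

lemma IsFaceOf.eq_of_subset_of_adim_le [FiniteDimensional ℝ V] {F G P : Set V}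
    (hF : IsFaceOf F P) (hFne : F.Nonempty) (hFG : F ⊆ G) (hGP : G ⊆ P)
    (hdim : adim G ≤ adim F) : G = F := by
  obtain ⟨l, rfl⟩ := hF
  obtain ⟨x₀, hx₀P, hx₀⟩ := hFne
  have hspan : vectorSpan ℝ {x ∈ P | ∀ y ∈ P, l y ≤ l x} = vectorSpan ℝ G :=
    Submodule.eq_of_le_of_finrank_le (vectorSpan_mono ℝ hFG) hdim
  have hker := vectorSpan_le_ker (S := {x ∈ P | ∀ y ∈ P, l y ≤ l x}) (l := l) (c := l x₀)
    fun x hx => le_antisymm (hx₀ x hx.1) (hx.2 x₀ hx₀P)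
  refine Set.Subset.antisymm (fun y hy => ⟨hGP hy, fun z hz => ?_⟩) hFG
  have : y -ᵥ x₀ ∈ LinearMap.ker l := hker (hspan ▸ vsub_mem_vectorSpan ℝ hy (hFG ⟨hx₀P, hx₀⟩))
  rw [LinearMap.mem_ker, vsub_eq_sub, map_sub, sub_eq_zero] at this
  exact this ▸ hx₀ z hz

lemma adim_eq_finrank_of_interior_nonempty {E : Type*} [NormedAddCommGroup E] [NormedSpace ℝ E]
    {S : Set E} (hS : (interior S).Nonempty) : adim S = finrank ℝ E := by
  rw [adim, ← direction_affineSpan,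
    affineSpan_eq_top_of_nonempty_interior (hS.mono (interior_mono (subset_convexHull ℝ S))),
    AffineSubspace.direction_top, finrank_top]

end ConvexGeometry

section HPolytope

variable {ι : Type*} [Fintype ι]

lemma convex_setOf_forall_dotProduct_le (W : Set (ι → ℝ)) (c : ℝ) :
    Convex ℝ {x : ι → ℝ | ∀ w ∈ W, w ⬝ᵥ x ≤ c} := by
  simp only [Set.ofPred_forall]
  exact convex_iInter₂ fun w _ => convex_halfSpace_le (dotProductBilin ℝ ℝ w).isLinear c

lemma Convex.exists_forall_dotProduct_lt {F : Set (ι → ℝ)} (hF : Convex ℝ F) (hne : F.Nonempty)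
    {W : Set (ι → ℝ)} (hW : W.Finite) {c : ℝ} (hle : ∀ w ∈ W, ∀ x ∈ F, w ⬝ᵥ x ≤ c)
    (hlt : ∀ w ∈ W, ∃ x ∈ F, w ⬝ᵥ x < c) : ∃ z ∈ F, ∀ w ∈ W, w ⬝ᵥ z < c := by
  suffices ∀ T : Finset (ι → ℝ), ↑T ⊆ W → ∃ z ∈ F, ∀ w ∈ T, w ⬝ᵥ z < c by
    simpa using this hW.toFinset (by simp)
  intro T
  induction T using Finset.induction_on with
  | empty => exact fun _ => hne.imp fun z hz => ⟨hz, by simp⟩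
  | insert a T _ ih =>
    intro hT
    obtain ⟨z, hzF, hz⟩ := ih (subset_trans (by simp) hT)
    obtain ⟨x, hxF, hx⟩ := hlt a (hT (by simp))
    refine ⟨(1 / 2 : ℝ) • z + (1 / 2 : ℝ) • x, hF hzF hxF (by norm_num) (by norm_num) (by norm_num),
      fun w hw => ?_⟩
    have hwW : w ∈ W := hT hw
    simp only [dotProduct_add, dotProduct_smul, smul_eq_mul]
    rcases Finset.mem_insert.1 hw with rfl | hw
    · linarith [hle w hwW z hzF]
    · linarith [hle w hwW x hxF, hz w hw]

/-- Otherwise the face contains a point satisfying all inequalities strictly; the polytope is a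
neighbourhood of it, so the exposing functional vanishes and the face is everything. -/
lemma exists_forall_dotProduct_eq_of_isFaceOf {W : Set (ι → ℝ)} (hW : W.Finite) {c : ℝ}
    {F : Set (ι → ℝ)} (hF : IsFaceOf F {x | ∀ w ∈ W, w ⬝ᵥ x ≤ c}) (hne : F.Nonempty)
    (hFP : F ≠ {x | ∀ w ∈ W, w ⬝ᵥ x ≤ c}) : ∃ w ∈ W, ∀ x ∈ F, w ⬝ᵥ x = c := by
  by_contra! h
  have hFsub := hF.subset
  obtain ⟨z, hzF, hz⟩ :=
    (hF.convex (convex_setOf_forall_dotProduct_le W c)).exists_forall_dotProduct_lt hne hW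
      (fun w hw x hx => hFsub hx w hw)
    fun w hw => (h w hw).imp fun x hx => ⟨hx.1, (hFsub hx.1 w hw).lt_of_ne hx.2⟩
  obtain ⟨l, rfl⟩ := hF
  have hl : ∀ u, l u ≤ 0 := by
    intro u
    have hev : ∀ᶠ ε in 𝓝 (0 : ℝ), ∀ w ∈ W, w ⬝ᵥ (z + ε • u) ≤ c :=
      (eventually_all_finite hW).2 fun w hw => by
        simpa [dotProduct_add, dotProduct_smul] using
          eventually_add_mul_le (hz w hw).le fun h => absurd h (hz w hw).ne
    obtain ⟨ε, hεP, hε⟩ :=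
      ((hev.filter_mono nhdsWithin_le_nhds).and (self_mem_nhdsWithin (s := Set.Ioi 0))).exists
    have := hzF.2 _ hεP
    rw [map_add, map_smul, smul_eq_mul] at this
    exact nonpos_of_mul_nonpos_right (by linarith) (show (0 : ℝ) < ε from hε)
  refine hFP (Set.ext fun x => ⟨fun hx => hx.1, fun hx => ⟨hx, fun y _ => ?_⟩⟩)
  linarith [hl (y - x), map_sub l y x]

end HPolytope

section SignedPerm

variable {ι : Type*} {τ : ι → ι}

def signedPerm (s : ι → ℝ) (τ : ι → ι) : (ι → ℝ) →ₗ[ℝ] ι → ℝ where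
  toFun x i := s i * x (τ i)
  map_add' x y := by ext i; simp [mul_add]
  map_smul' a x := by ext i; simp [mul_left_comm]

@[simp] lemma signedPerm_apply (s : ι → ℝ) (τ : ι → ι) (x : ι → ℝ) (i : ι) :
    signedPerm s τ x i = s i * x (τ i) := rfl

variable {s : ι → ℝ}

lemma signedPerm_signedPerm (hs : ∀ i, s i * s i = 1) (hτ : Function.Involutive τ)
    (x : ι → ℝ) : signedPerm (s ∘ τ) τ (signedPerm s τ x) = x := by
  ext i; simp [hτ i, ← mul_assoc, hs]

lemma signedPerm_signedPerm_comp (hs : ∀ i, s i * s i = 1) (hτ : Function.Involutive τ)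
    (x : ι → ℝ) : signedPerm s τ (signedPerm (s ∘ τ) τ x) = x := by
  ext i; simp [hτ i, ← mul_assoc, hs]

lemma signedPerm_injective (hs : ∀ i, s i * s i = 1) (hτ : Function.Involutive τ) :
    Function.Injective (signedPerm s τ) :=
  Function.LeftInverse.injective (signedPerm_signedPerm hs hτ)

lemma dotProduct_signedPerm [Fintype ι] (hτ : Function.Involutive τ) (s w x : ι → ℝ) :
    w ⬝ᵥ signedPerm s τ x = signedPerm (s ∘ τ) τ w ⬝ᵥ x :=
  Fintype.sum_equiv (hτ.toPerm τ) _ _ fun i => by simp [hτ i]; ring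

lemma signedPerm_dotProduct_signedPerm [Fintype ι] (hs : ∀ i, s i * s i = 1)
    (hτ : Function.Involutive τ) (w x : ι → ℝ) : signedPerm s τ w ⬝ᵥ signedPerm s τ x = w ⬝ᵥ x := by
  rw [dotProduct_signedPerm hτ, signedPerm_signedPerm hs hτ]

lemma image_signedPerm_setOf_dotProduct_eq [Fintype ι] (hs : ∀ i, s i * s i = 1)
    (hτ : Function.Involutive τ) (P : Set (ι → ℝ)) (w : ι → ℝ) (c : ℝ) :
    signedPerm s τ '' {x ∈ P | w ⬝ᵥ x = c} =
      {y ∈ signedPerm s τ '' P | signedPerm s τ w ⬝ᵥ y = c} := by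
  ext y
  constructor
  · rintro ⟨x, ⟨hx, hwx⟩, rfl⟩
    exact ⟨⟨x, hx, rfl⟩, by rwa [signedPerm_dotProduct_signedPerm hs hτ]⟩
  · rintro ⟨⟨x, hx, rfl⟩, hwx⟩
    exact ⟨x, ⟨hx, by rwa [signedPerm_dotProduct_signedPerm hs hτ] at hwx⟩, rfl⟩

end SignedPerm

section Wplus

def swapIf (sw : Bool) (i : Fin 4) : Fin 4 := if sw then swapIdx i else i

lemma swapIf_involutive (sw : Bool) : Function.Involutive (swapIf sw) := by
  intro i; cases sw <;> fin_cases i <;> rfl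

lemma signedPerm_mem_SymGrp {s : Fin 4 → ℝ} (hs : ∀ i, s i = 1 ∨ s i = -1) (sw : Bool) :
    ⇑(signedPerm s (swapIf sw)) ∈ SymGrp :=
  ⟨s, sw, hs, rfl⟩

lemma signedPerm_mem_Wplus {s : Fin 4 → ℝ} (hs : ∀ i, s i = 1 ∨ s i = -1) (sw : Bool)
    {w : Fin 4 → ℝ} (hw : w ∈ Wplus) : signedPerm s (swapIf sw) w ∈ Wplus := by
  obtain ⟨e, he, rfl | rfl⟩ := hw <;>
  refine ⟨fun i => s i * e (swapIf sw i), fun i => mul_eq_one_or_neg_one (hs i) (he _), ?_⟩ <;>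
  cases sw
  · left; ext i; fin_cases i <;> simp [swapIf] <;> ring
  · right; ext i; fin_cases i <;> simp [swapIf, swapIdx] <;> ring
  · right; ext i; fin_cases i <;> simp [swapIf] <;> ring
  · left; ext i; fin_cases i <;> simp [swapIf, swapIdx] <;> ring

lemma exists_signedPerm_eq_of_mem_Wplus {w w' : Fin 4 → ℝ} (hw : w ∈ Wplus) (hw' : w' ∈ Wplus) :
    ∃ (s : Fin 4 → ℝ) (sw : Bool), (∀ i, s i = 1 ∨ s i = -1) ∧
      signedPerm s (swapIf sw) w = w' := by
  obtain ⟨e, he, hw⟩ := hw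
  obtain ⟨e', he', hw'⟩ := hw'
  have he2 : ∀ i, e i ^ 2 = 1 := fun i => by rcases he i with h | h <;> simp [h]
  have key : ∀ sw i, e' i * e (swapIf sw i) = 1 ∨ e' i * e (swapIf sw i) = -1 :=
    fun sw i => mul_eq_one_or_neg_one (he' i) (he _)
  rcases hw with rfl | rfl <;> rcases hw' with rfl | rfl
  · refine ⟨_, false, key false, ?_⟩
    ext i; fin_cases i <;> simp [swapIf] <;> ring_nf <;> simp [he2]
  · refine ⟨_, true, key true, ?_⟩
    ext i; fin_cases i <;> simp [swapIf, swapIdx] <;> ring_nf <;> simp [he2]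
  · refine ⟨_, true, key true, ?_⟩
    ext i; fin_cases i <;> simp [swapIf, swapIdx] <;> ring_nf <;> simp [he2]
  · refine ⟨_, false, key false, ?_⟩
    ext i; fin_cases i <;> simp [swapIf] <;> ring_nf <;> simp [he2]

lemma dotProduct_self_of_mem_Wplus {w : Fin 4 → ℝ} (hw : w ∈ Wplus) : w ⬝ᵥ w = 31 := by
  obtain ⟨e, he, rfl | rfl⟩ := hw <;>
    have he2 i : e i * e i = 1 := mul_self_eq_one_iff.2 (he i) <;>
    simp [dotProduct, Fin.sum_univ_four]
  · linear_combination 25 * he2 0 + he2 1 + 4 * he2 2 + he2 3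
  · linear_combination he2 0 + 25 * he2 1 + he2 2 + 4 * he2 3

lemma dotProduct_eq_sub_of_mem_Wplus {w w' : Fin 4 → ℝ} (hw : w ∈ Wplus) (hw' : w' ∈ Wplus) :
    w ⬝ᵥ w' = 31 - (w - w') ⬝ᵥ (w - w') / 2 := by
  simp only [sub_dotProduct, dotProduct_sub, dotProduct_self_of_mem_Wplus hw,
    dotProduct_self_of_mem_Wplus hw', dotProduct_comm w' w]
  ring

lemma dotProduct_le_of_mem_Wplus {w w' : Fin 4 → ℝ} (hw : w ∈ Wplus) (hw' : w' ∈ Wplus) :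
    w ⬝ᵥ w' ≤ 31 := by
  rw [dotProduct_eq_sub_of_mem_Wplus hw hw']
  have : 0 ≤ (w - w') ⬝ᵥ (w - w') := Finset.sum_nonneg fun i _ => mul_self_nonneg _
  linarith

lemma eq_of_dotProduct_eq_of_mem_Wplus {w w' : Fin 4 → ℝ} (hw : w ∈ Wplus) (hw' : w' ∈ Wplus)
    (h : w ⬝ᵥ w' = 31) : w = w' := by
  rw [dotProduct_eq_sub_of_mem_Wplus hw hw'] at h
  exact sub_eq_zero.1 (dotProduct_self_eq_zero.1 (by linarith))

def normalA (e : Fin 4 → ℝ) : Fin 4 → ℝ := ![5 * e 0, e 1, 2 * e 2, e 3]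

def normalB (e : Fin 4 → ℝ) : Fin 4 → ℝ := ![e 0, 5 * e 1, e 2, 2 * e 3]

def signVectors : Set (Fin 4 → ℝ) := Set.univ.pi fun _ => Sgn

lemma ncard_signVectors : signVectors.ncard = 16 := by
  have h2 : Sgn.encard = 2 := Set.encard_pair (by norm_num)
  rw [Set.ncard_def, signVectors, Set.encard_pi_eq_prod_encard]
  simp [h2]
  rfl

lemma Wplus_eq_union : Wplus = normalA '' signVectors ∪ normalB '' signVectors := by
  ext w
  simp only [Wplus, normalA, normalB, signVectors, Sgn, Set.mem_union, Set.mem_image, Set.mem_pi,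
    Set.mem_univ, true_implies, Set.mem_insert_iff, Set.mem_singleton_iff, Set.mem_ofPred_eq]
  constructor
  · rintro ⟨e, he, h | h⟩
    exacts [.inl ⟨e, he, h.symm⟩, .inr ⟨e, he, h.symm⟩]
  · rintro (⟨e, he, rfl⟩ | ⟨e, he, rfl⟩)
    exacts [⟨e, he, .inl rfl⟩, ⟨e, he, .inr rfl⟩]

lemma finite_signVectors : signVectors.Finite :=
  Set.Finite.pi fun _ => (Set.finite_singleton _).insert _

lemma finite_Wplus : Wplus.Finite := by
  rw [Wplus_eq_union]
  exact (finite_signVectors.image _).union (finite_signVectors.image _)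

lemma ncard_Wplus : Wplus.ncard = 32 := by
  have hfin := finite_signVectors
  have hinjA : Function.Injective normalA := by
    intro e e' h
    simp only [normalA, funext_iff, Fin.forall_fin_succ] at h
    ext i; fin_cases i <;> simp_all
  have hinjB : Function.Injective normalB := by
    intro e e' h
    simp only [normalB, funext_iff, Fin.forall_fin_succ] at h
    ext i; fin_cases i <;> simp_all
  have hdisj : Disjoint (normalA '' signVectors) (normalB '' signVectors) := by
    rw [Set.disjoint_left]
    rintro _ ⟨e, he, rfl⟩ ⟨e', he', h⟩
    have h0 : e' 0 = 5 * e 0 := by simpa [normalA, normalB] using congrFun h 0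
    obtain h1 | h1 : e 0 = 1 ∨ e 0 = -1 := he 0 trivial <;>
    obtain h2 | h2 : e' 0 = 1 ∨ e' 0 = -1 := he' 0 trivial <;>
    norm_num [h1, h2] at h0
  rw [Wplus_eq_union, Set.ncard_union_eq hdisj (hfin.image _) (hfin.image _),
    Set.ncard_image_of_injective _ hinjA, Set.ncard_image_of_injective _ hinjB, ncard_signVectors]

end Wplus

section Qplus4Basics

lemma dotProduct_le_of_mem_QplusPts {w v : Fin 4 → ℝ} (hw : w ∈ Wplus) (hv : v ∈ QplusPts) :
    w ⬝ᵥ v ≤ 90 := by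
  obtain ⟨e, he, hw⟩ := hw
  obtain ⟨a, ha, b, hb, hv⟩ := hv
  have hle : ∀ {x y : ℝ}, (x = 1 ∨ x = -1) → (y = 1 ∨ y = -1) → x * y ≤ 1 := by
    rintro x y (rfl | rfl) (rfl | rfl) <;> norm_num
  have ha' := fun i => hle (he i) ha
  have hb' := fun i => hle (he i) hb
  rcases hw with rfl | rfl <;> rcases hv with rfl | rfl | rfl | rfl | rfl | rfl | rfl | rfl <;>
    simp [dotProduct, Fin.sum_univ_four] <;>
    linarith [ha' 0, ha' 1, ha' 2, ha' 3, hb' 0, hb' 1, hb' 2, hb' 3]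

lemma dotProduct_le_of_mem_Qplus4 {w x : Fin 4 → ℝ} (hw : w ∈ Wplus) (hx : x ∈ Qplus4) :
    w ⬝ᵥ x ≤ 90 :=
  convexHull_min (fun _ hv => dotProduct_le_of_mem_QplusPts hw hv)
    (convex_halfSpace_le (dotProductBilin ℝ ℝ w).isLinear 90) hx

lemma zero_mem_Qplus4 : (0 : Fin 4 → ℝ) ∈ Qplus4 := by
  have hpos : ![1 * 18, 0, 0, 0] ∈ QplusPts := ⟨1, .inl rfl, 1, .inl rfl, .inl rfl⟩
  have hneg : ![-1 * 18, 0, 0, 0] ∈ QplusPts := ⟨-1, .inr rfl, 1, .inl rfl, .inl rfl⟩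
  have hQ : Convex ℝ Qplus4 := convex_convexHull ℝ _
  convert hQ (subset_convexHull ℝ _ hpos) (subset_convexHull ℝ _ hneg)
    (by norm_num : (0 : ℝ) ≤ 1 / 2) (by norm_num : (0 : ℝ) ≤ 1 / 2) (by norm_num) using 1
  ext i; fin_cases i <;> norm_num

end Qplus4Basics

section Kpos

def wA : Fin 4 → ℝ := ![5, 1, 2, 1]

def wB : Fin 4 → ℝ := ![1, 5, 1, 2]

@[simp] lemma wA_dotProduct (y : Fin 4 → ℝ) : wA ⬝ᵥ y = 5 * y 0 + y 1 + 2 * y 2 + y 3 := by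
  simp [wA, dotProduct, Fin.sum_univ_four]

@[simp] lemma wB_dotProduct (y : Fin 4 → ℝ) : wB ⬝ᵥ y = y 0 + 5 * y 1 + y 2 + 2 * y 3 := by
  simp [wB, dotProduct, Fin.sum_univ_four]

lemma wA_mem_Wplus : wA ∈ Wplus :=
  ⟨1, fun _ => .inl rfl, .inl (by ext i; fin_cases i <;> simp [wA])⟩

lemma wB_mem_Wplus : wB ∈ Wplus :=
  ⟨1, fun _ => .inl rfl, .inr (by ext i; fin_cases i <;> simp [wB])⟩

def Kpos : Set (Fin 4 → ℝ) := {y | 0 ≤ y ∧ wA ⬝ᵥ y ≤ 90 ∧ wB ⬝ᵥ y ≤ 90}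

def KposVerts : Set (Fin 4 → ℝ) :=
  {0, ![18, 0, 0, 0], ![0, 18, 0, 0], ![0, 0, 45, 0], ![0, 0, 0, 45],
    ![15, 15, 0, 0], ![0, 0, 30, 30], ![0, 10, 40, 0], ![10, 0, 0, 40]}

lemma convex_Kpos : Convex ℝ Kpos :=
  (convex_Ici 0).inter ((convex_halfSpace_le (dotProductBilin ℝ ℝ wA).isLinear 90).inter
    (convex_halfSpace_le (dotProductBilin ℝ ℝ wB).isLinear 90))

lemma isCompact_Kpos : IsCompact Kpos := by
  have hclosed : IsClosed Kpos :=
    isClosed_Ici.inter ((isClosed_le (continuous_const.dotProduct continuous_id)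
      continuous_const).inter (isClosed_le (continuous_const.dotProduct continuous_id)
      continuous_const))
  refine (isCompact_Icc (a := 0) (b := fun _ => 90)).of_isClosed_subset hclosed ?_
  rintro y ⟨hy, hA, -⟩
  have := fun i => (show (0 : ℝ) ≤ y i from hy i)
  simp only [wA_dotProduct] at hA
  refine ⟨hy, fun i => ?_⟩
  fin_cases i <;> simp <;> linarith [this 0, this 1, this 2, this 3]

variable {y : Fin 4 → ℝ}

lemma eq_zero_of_mem_extremePoints_Kpos (hy : y ∈ Kpos.extremePoints ℝ) {d : Fin 4 → ℝ}
    (hd : ∀ i, y i = 0 → d i = 0) (hA : wA ⬝ᵥ y = 90 → wA ⬝ᵥ d = 0)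
    (hB : wB ⬝ᵥ y = 90 → wB ⬝ᵥ d = 0) : d = 0 := by
  obtain ⟨hy0, hyA, hyB⟩ := hy.1
  refine eq_zero_of_eventually_add_smul_mem hy ?_
  have hcoord : ∀ᶠ ε in 𝓝 (0 : ℝ), ∀ i, -y i + ε * -d i ≤ 0 :=
    eventually_all.2 fun i => eventually_add_mul_le (neg_nonpos.2 (hy0 i))
      fun h => by rw [hd i (neg_eq_zero.1 h), neg_zero]
  filter_upwards [hcoord, eventually_add_mul_le hyA hA, eventually_add_mul_le hyB hB]
    with ε hε hεA hεB
  refine ⟨fun i => ?_, ?_, ?_⟩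
  · simp only [Pi.zero_apply, Pi.add_apply, Pi.smul_apply, smul_eq_mul]
    linarith [hε i]
  · rwa [dotProduct_add, dotProduct_smul, smul_eq_mul]
  · rwa [dotProduct_add, dotProduct_smul, smul_eq_mul]

/-- Scaled by `∏ i ∈ s, y i`, the direction `c` vanishes wherever `y` does, so it is an admissible
perturbation of `y`. -/
lemma prod_smul_eq_zero_of_mem_extremePoints_Kpos (hy : y ∈ Kpos.extremePoints ℝ)
    (s : Finset (Fin 4)) {c : Fin 4 → ℝ} (hc : ∀ i ∉ s, c i = 0)
    (hA : wA ⬝ᵥ y = 90 → wA ⬝ᵥ c = 0) (hB : wB ⬝ᵥ y = 90 → wB ⬝ᵥ c = 0) :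
    (∏ i ∈ s, y i) • c = 0 := by
  refine eq_zero_of_mem_extremePoints_Kpos hy (fun i hi => ?_) (fun h => ?_) fun h => ?_
  · by_cases his : i ∈ s
    · simp [Finset.prod_eq_zero his hi]
    · simp [hc i his]
  · rw [dotProduct_smul, hA h, smul_zero]
  · rw [dotProduct_smul, hB h, smul_zero]

lemma mul_eq_zero_of_mem_extremePoints_Kpos (hy : y ∈ Kpos.extremePoints ℝ) {u : Fin 4 → ℝ}
    (hu : ∀ k, u k ≠ 0) (hA : wA ⬝ᵥ y = 90 → wA = u) (hB : wB ⬝ᵥ y = 90 → wB = u) {i j : Fin 4}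
    (hij : i ≠ j) : y i * y j = 0 := by
  have hker : u ⬝ᵥ (Pi.single i (u j) - Pi.single j (u i)) = 0 := by
    simp [dotProduct_sub, mul_comm]
  have h := congrFun (prod_smul_eq_zero_of_mem_extremePoints_Kpos hy {i, j}
    (c := Pi.single i (u j) - Pi.single j (u i)) (fun k hk => by simp_all)
    (fun h => by rw [hA h]; exact hker) fun h => by rw [hB h]; exact hker) i
  simpa [Finset.prod_pair hij, hij, hu j] using h

lemma mem_KposVerts_of_forall_ne_eq_zero (hy : y ∈ Kpos) (htight : wA ⬝ᵥ y = 90 ∨ wB ⬝ᵥ y = 90)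
    (i : Fin 4) (hi : ∀ j, j ≠ i → y j = 0) : y ∈ KposVerts := by
  obtain ⟨-, hA, hB⟩ := hy
  simp only [wA_dotProduct, wB_dotProduct] at hA hB htight
  fin_cases i
  · have h1 := hi 1 (by decide); have h2 := hi 2 (by decide); have h3 := hi 3 (by decide)
    rw [eq_vecCons_four (show y 0 = 18 by rcases htight with h | h <;> linarith) h1 h2 h3]
    simp [KposVerts]
  · have h0 := hi 0 (by decide); have h2 := hi 2 (by decide); have h3 := hi 3 (by decide)
    rw [eq_vecCons_four h0 (show y 1 = 18 by rcases htight with h | h <;> linarith) h2 h3]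
    simp [KposVerts]
  · have h0 := hi 0 (by decide); have h1 := hi 1 (by decide); have h3 := hi 3 (by decide)
    rw [eq_vecCons_four h0 h1 (show y 2 = 45 by rcases htight with h | h <;> linarith) h3]
    simp [KposVerts]
  · have h0 := hi 0 (by decide); have h1 := hi 1 (by decide); have h2 := hi 2 (by decide)
    rw [eq_vecCons_four h0 h1 h2 (show y 3 = 45 by rcases htight with h | h <;> linarith)]
    simp [KposVerts]

lemma mem_KposVerts_of_tight (hy0 : 0 ≤ y) (hA : wA ⬝ᵥ y = 90) (hB : wB ⬝ᵥ y = 90)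
    (h012 : y 0 = 0 ∨ y 1 = 0 ∨ y 2 = 0) (h013 : y 0 = 0 ∨ y 1 = 0 ∨ y 3 = 0)
    (h023 : y 0 = 0 ∨ y 2 = 0 ∨ y 3 = 0) (h123 : y 1 = 0 ∨ y 2 = 0 ∨ y 3 = 0) :
    y ∈ KposVerts := by
  simp only [wA_dotProduct, wB_dotProduct] at hA hB
  have hy := fun i => (show 0 ≤ y i from hy0 i)
  rcases (hy 0).eq_or_lt with h0 | h0 <;> rcases (hy 1).eq_or_lt with h1 | h1
  · rw [eq_vecCons_four h0.symm h1.symm (show y 2 = 30 by linarith) (show y 3 = 30 by linarith)]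
    simp [KposVerts]
  · obtain h2 | h3 := h123.resolve_left h1.ne'
    · linarith [hy 3]
    · rw [eq_vecCons_four h0.symm (show y 1 = 10 by linarith) (show y 2 = 40 by linarith) h3]
      simp [KposVerts]
  · obtain h2 | h3 := h023.resolve_left h0.ne'
    · rw [eq_vecCons_four (show y 0 = 10 by linarith) h1.symm h2 (show y 3 = 40 by linarith)]
      simp [KposVerts]
    · linarith [hy 2]
  · have h2 := (h012.resolve_left h0.ne').resolve_left h1.ne'
    have h3 := (h013.resolve_left h0.ne').resolve_left h1.ne'
    rw [eq_vecCons_four (show y 0 = 15 by linarith) (show y 1 = 15 by linarith) h2 h3]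
    simp [KposVerts]

lemma extremePoints_Kpos_subset : Kpos.extremePoints ℝ ⊆ KposVerts := by
  intro y hy
  obtain ⟨hy0, hyA, hyB⟩ := hy.1
  have hwA : ∀ k, wA k ≠ 0 := fun k => by fin_cases k <;> simp [wA]
  have hwB : ∀ k, wB k ≠ 0 := fun k => by fin_cases k <;> simp [wB]
  -- `y` has at most as many nonzero coordinates as tight inequalities among `wA`, `wB`
  rcases hyA.eq_or_lt with hA | hA <;> rcases hyB.eq_or_lt with hB | hB
  · have hdir : ∀ (s : Finset (Fin 4)) (c : Fin 4 → ℝ), (∀ i ∉ s, c i = 0) → wA ⬝ᵥ c = 0 →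
        wB ⬝ᵥ c = 0 → (∏ i ∈ s, y i) • c = 0 := fun s c hc hcA hcB =>
      prod_smul_eq_zero_of_mem_extremePoints_Kpos hy s hc (fun _ => hcA) fun _ => hcB
    have h012 := congrFun (hdir {0, 1, 2} ![3, 1, -8, 0] (by intro i; fin_cases i <;> simp)
      (by norm_num [wA]) (by norm_num [wB])) 0
    have h013 := congrFun (hdir {0, 1, 3} ![1, 3, 0, -8] (by intro i; fin_cases i <;> simp)
      (by norm_num [wA]) (by norm_num [wB])) 0
    have h023 := congrFun (hdir {0, 2, 3} ![-1, 0, 3, -1] (by intro i; fin_cases i <;> simp)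
      (by norm_num [wA]) (by norm_num [wB])) 0
    have h123 := congrFun (hdir {1, 2, 3} ![0, 1, 1, -3] (by intro i; fin_cases i <;> simp)
      (by norm_num [wA]) (by norm_num [wB])) 1
    simp at h012 h013 h023 h123
    exact mem_KposVerts_of_tight hy0 hA hB h012 h013 h023 h123
  · obtain ⟨i, hi⟩ := exists_forall_ne_eq_zero_of_mul_eq_zero fun i j =>
      mul_eq_zero_of_mem_extremePoints_Kpos hy hwA (fun _ => rfl) fun h => absurd h hB.ne
    exact mem_KposVerts_of_forall_ne_eq_zero hy.1 (.inl hA) i hi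
  · obtain ⟨i, hi⟩ := exists_forall_ne_eq_zero_of_mul_eq_zero fun i j =>
      mul_eq_zero_of_mem_extremePoints_Kpos hy hwB (fun h => absurd h hA.ne) fun _ => rfl
    exact mem_KposVerts_of_forall_ne_eq_zero hy.1 (.inr hB) i hi
  · rw [eq_zero_of_mem_extremePoints_Kpos hy (d := y) (fun _ h => h) (fun h => absurd h hA.ne)
      fun h => absurd h hB.ne]
    simp [KposVerts]

end Kpos

section HRepresentation

lemma signedPerm_mem_Qplus4_of_mem_KposVerts {s : Fin 4 → ℝ} (hs : ∀ i, s i = 1 ∨ s i = -1)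
    {v : Fin 4 → ℝ} (hv : v ∈ KposVerts) : signedPerm s id v ∈ Qplus4 := by
  rcases hv with rfl | rfl | rfl | rfl | rfl | rfl | rfl | rfl | rfl
  · simpa using zero_mem_Qplus4
  all_goals refine subset_convexHull ℝ _ ?_
  · exact ⟨s 0, hs 0, 1, .inl rfl, .inl (by ext i; fin_cases i <;> simp)⟩
  · exact ⟨s 1, hs 1, 1, .inl rfl, .inr <| .inl (by ext i; fin_cases i <;> simp)⟩
  · exact ⟨s 2, hs 2, 1, .inl rfl, .inr <| .inr <| .inl (by ext i; fin_cases i <;> simp)⟩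
  · exact ⟨s 3, hs 3, 1, .inl rfl, .inr <| .inr <| .inr <| .inl (by ext i; fin_cases i <;> simp)⟩
  · exact ⟨s 0, hs 0, s 1, hs 1, .inr <| .inr <| .inr <| .inr <| .inl
      (by ext i; fin_cases i <;> simp)⟩
  · exact ⟨s 2, hs 2, s 3, hs 3, .inr <| .inr <| .inr <| .inr <| .inr <| .inl
      (by ext i; fin_cases i <;> simp)⟩
  · exact ⟨s 1, hs 1, s 2, hs 2, .inr <| .inr <| .inr <| .inr <| .inr <| .inr <| .inl
      (by ext i; fin_cases i <;> simp)⟩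
  · exact ⟨s 0, hs 0, s 3, hs 3, .inr <| .inr <| .inr <| .inr <| .inr <| .inr <| .inr
      (by ext i; fin_cases i <;> simp)⟩

lemma finite_KposVerts : KposVerts.Finite := by
  simp [KposVerts]

lemma Kpos_subset_convexHull : Kpos ⊆ convexHull ℝ KposVerts :=
  calc Kpos = closure (convexHull ℝ (Kpos.extremePoints ℝ)) :=
        (closure_convexHull_extremePoints isCompact_Kpos convex_Kpos).symm
    _ ⊆ closure (convexHull ℝ KposVerts) := closure_mono (convexHull_mono extremePoints_Kpos_subset)
    _ = convexHull ℝ KposVerts := (finite_KposVerts.isCompact_convexHull ℝ).isClosed.closure_eq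

lemma mem_Qplus4_of_forall_dotProduct_le {x : Fin 4 → ℝ} (hx : ∀ w ∈ Wplus, w ⬝ᵥ x ≤ 90) :
    x ∈ Qplus4 := by
  set s : Fin 4 → ℝ := fun i => if 0 ≤ x i then 1 else -1
  have hs : ∀ i, s i = 1 ∨ s i = -1 := fun i => by by_cases h : 0 ≤ x i <;> simp [s, h]
  have hs2 : ∀ i, s i * s i = 1 := fun i => mul_self_eq_one_iff.2 (hs i)
  have hsx : signedPerm s id x ∈ Kpos := by
    refine ⟨fun i => ?_, ?_, ?_⟩
    · by_cases h : 0 ≤ x i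
      · simp [s, h]
      · simp [s, h]; linarith
    · rw [dotProduct_signedPerm (fun _ => rfl)]
      exact hx _ (signedPerm_mem_Wplus hs false wA_mem_Wplus)
    · rw [dotProduct_signedPerm (fun _ => rfl)]
      exact hx _ (signedPerm_mem_Wplus hs false wB_mem_Wplus)
  have hhull : convexHull ℝ KposVerts ⊆ signedPerm s id ⁻¹' Qplus4 :=
    convexHull_min (fun v hv => signedPerm_mem_Qplus4_of_mem_KposVerts hs hv)
      ((convex_convexHull ℝ _).linear_preimage _)
  have hinv := signedPerm_signedPerm hs2 (τ := id) (fun _ => rfl) x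
  rw [Function.comp_id] at hinv
  simpa [hinv] using hhull (Kpos_subset_convexHull hsx)

lemma Qplus4_eq : Qplus4 = {x | ∀ w ∈ Wplus, w ⬝ᵥ x ≤ 90} :=
  Set.Subset.antisymm (fun _ hx _ hw => dotProduct_le_of_mem_Qplus4 hw hx)
    fun _ => mem_Qplus4_of_forall_dotProduct_le

lemma adim_Qplus4 : adim Qplus4 = 4 := by
  have hopen : {x : Fin 4 → ℝ | ∀ w ∈ Wplus, w ⬝ᵥ x < 90} ∈ 𝓝 0 :=
    (eventually_all_finite finite_Wplus).2 fun w _ =>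
      (continuous_const.dotProduct continuous_id).continuousAt.eventually_lt continuousAt_const
        (by simp)
  have h0 : (0 : Fin 4 → ℝ) ∈ interior Qplus4 :=
    mem_interior_iff_mem_nhds.2 (Filter.mem_of_superset hopen fun x hx =>
      mem_Qplus4_of_forall_dotProduct_le fun w hw => (hx w hw).le)
  rw [adim_eq_finrank_of_interior_nonempty ⟨0, h0⟩, Module.finrank_fin_fun]

end HRepresentation

section Facets

lemma image_signedPerm_Qplus4 {s : Fin 4 → ℝ} (hs : ∀ i, s i = 1 ∨ s i = -1) (sw : Bool) :
    signedPerm s (swapIf sw) '' Qplus4 = Qplus4 := by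
  have hmaps : ∀ s : Fin 4 → ℝ, (∀ i, s i = 1 ∨ s i = -1) →
      Set.MapsTo (signedPerm s (swapIf sw)) Qplus4 Qplus4 := by
    intro s hs x hx
    rw [Qplus4_eq] at hx ⊢
    intro w hw
    rw [dotProduct_signedPerm (swapIf_involutive sw)]
    exact hx _ (signedPerm_mem_Wplus (fun i => hs _) sw hw)
  refine (hmaps s hs).image_subset.antisymm fun x hx =>
    ⟨signedPerm (s ∘ swapIf sw) (swapIf sw) x, hmaps _ (fun i => hs _) hx, ?_⟩
  exact signedPerm_signedPerm_comp (fun i => mul_self_eq_one_iff.2 (hs i)) (swapIf_involutive sw) x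

def Qface (w : Fin 4 → ℝ) : Set (Fin 4 → ℝ) := {x ∈ Qplus4 | w ⬝ᵥ x = 90}

lemma image_signedPerm_Qface {s : Fin 4 → ℝ} (hs : ∀ i, s i = 1 ∨ s i = -1) (sw : Bool)
    (w : Fin 4 → ℝ) : signedPerm s (swapIf sw) '' Qface w = Qface (signedPerm s (swapIf sw) w) := by
  rw [Qface, image_signedPerm_setOf_dotProduct_eq (fun i => mul_self_eq_one_iff.2 (hs i))
    (swapIf_involutive sw), image_signedPerm_Qplus4 hs sw, Qface]

variable {w : Fin 4 → ℝ}

lemma smul_mem_Qface (hw : w ∈ Wplus) : (90 / 31 : ℝ) • w ∈ Qface w := by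
  refine ⟨mem_Qplus4_of_forall_dotProduct_le fun w' hw' => ?_, ?_⟩
  · rw [dotProduct_smul, smul_eq_mul]
    linarith [dotProduct_le_of_mem_Wplus hw' hw]
  · rw [dotProduct_smul, dotProduct_self_of_mem_Wplus hw, smul_eq_mul]
    norm_num

lemma isFaceOf_Qface (hw : w ∈ Wplus) : IsFaceOf (Qface w) Qplus4 :=
  isFaceOf_setOf_eq (dotProductBilin ℝ ℝ w) (fun _ hx => dotProduct_le_of_mem_Qplus4 hw hx)
    (smul_mem_Qface hw).1 (smul_mem_Qface hw).2

lemma adim_Qface_wA : adim (Qface wA) = 3 := by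
  have hl : dotProductBilin ℝ ℝ wA ≠ 0 := fun h => by
    simpa [wA] using LinearMap.congr_fun h (Pi.single 0 1)
  have hle := adim_lt_finrank hl (S := Qface wA) fun x hx => hx.2
  have hmem : ∀ v ∈ QplusPts, wA ⬝ᵥ v = 90 → v ∈ Qface wA :=
    fun v hv hv90 => ⟨subset_convexHull ℝ _ hv, hv90⟩
  have h₀ := hmem ![18, 0, 0, 0] ⟨1, .inl rfl, 1, .inl rfl, .inl (by simp)⟩
    (by rw [wA_dotProduct]; simp; norm_num)
  have h₁ := hmem ![15, 15, 0, 0] ⟨1, .inl rfl, 1, .inl rfl, .inr <| .inr <| .inr <| .inr <| .inl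
    (by simp)⟩ (by rw [wA_dotProduct]; simp; norm_num)
  have h₂ := hmem ![0, 0, 45, 0] ⟨1, .inl rfl, 1, .inl rfl, .inr <| .inr <| .inl (by simp)⟩
    (by rw [wA_dotProduct]; simp; norm_num)
  have h₃ := hmem ![10, 0, 0, 40] ⟨1, .inl rfl, 1, .inl rfl, .inr <| .inr <| .inr <| .inr <| .inr <|
    .inr <| .inr (by simp)⟩ (by rw [wA_dotProduct]; simp; norm_num)
  have hli : LinearIndependent ℝ ![![(-3 : ℝ), 15, 0, 0], ![-18, 0, 45, 0], ![-8, 0, 0, 40]] := by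
    rw [Fintype.linearIndependent_iff]
    intro g hg
    have h1 := congrFun hg 1
    have h2 := congrFun hg 2
    have h3 := congrFun hg 3
    simp [Fin.sum_univ_three] at h1 h2 h3
    intro j; fin_cases j <;> simpa
  have hsub : Set.range ![![(-3 : ℝ), 15, 0, 0], ![-18, 0, 45, 0], ![-8, 0, 0, 40]] ⊆
      vectorSpan ℝ (Qface wA) := by
    refine Set.range_subset_iff.2 fun i => SetLike.mem_coe.2 ?_
    fin_cases i
    · convert vsub_mem_vectorSpan ℝ h₁ h₀ using 1; ext j; fin_cases j <;> norm_num
    · convert vsub_mem_vectorSpan ℝ h₂ h₀ using 1; ext j; fin_cases j <;> norm_num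
    · convert vsub_mem_vectorSpan ℝ h₃ h₀ using 1; ext j; fin_cases j <;> norm_num
  have hge := Submodule.finrank_mono (Submodule.span_le.2 hsub)
  rw [finrank_span_eq_card hli, Fintype.card_fin] at hge
  rw [Module.finrank_fin_fun] at hle
  exact le_antisymm (Nat.le_of_lt_succ hle) hge

lemma adim_Qface (hw : w ∈ Wplus) : adim (Qface w) = 3 := by
  obtain ⟨s, sw, hs, rfl⟩ := exists_signedPerm_eq_of_mem_Wplus wA_mem_Wplus hw
  rw [← image_signedPerm_Qface hs sw, adim_image_of_injective _
    (signedPerm_injective (fun i => mul_self_eq_one_iff.2 (hs i)) (swapIf_involutive sw)),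
    adim_Qface_wA]

lemma isFacetOf_Qface (hw : w ∈ Wplus) : IsFacetOf (Qface w) Qplus4 :=
  ⟨isFaceOf_Qface hw, by rw [adim_Qface hw, adim_Qplus4]⟩

lemma exists_eq_Qface_of_isFacetOf {F : Set (Fin 4 → ℝ)} (hF : IsFacetOf F Qplus4) :
    ∃ w ∈ Wplus, F = Qface w := by
  obtain ⟨hface, hdim⟩ := hF
  rw [adim_Qplus4] at hdim
  have hne : F.Nonempty := Set.nonempty_iff_ne_empty.2 <| by
    rintro rfl
    rw [adim, vectorSpan_empty, finrank_bot] at hdim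
    omega
  have hFQ : F ≠ Qplus4 := by rintro rfl; rw [adim_Qplus4] at hdim; omega
  obtain ⟨w, hw, hFw⟩ := exists_forall_dotProduct_eq_of_isFaceOf finite_Wplus
    (Qplus4_eq ▸ hface) hne (Qplus4_eq ▸ hFQ)
  refine ⟨w, hw, (hface.eq_of_subset_of_adim_le (G := Qface w) hne
    (fun x hx => ⟨hface.subset hx, hFw x hx⟩) (Set.sep_subset _ _) ?_).symm⟩
  rw [adim_Qface hw]; omega

lemma Qface_injOn : Set.InjOn Qface Wplus := by
  intro w hw w' hw' h
  have h90 := (h ▸ smul_mem_Qface hw).2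
  rw [dotProduct_smul, smul_eq_mul] at h90
  exact eq_of_dotProduct_eq_of_mem_Wplus hw hw' (by rw [dotProduct_comm]; linarith)

lemma ncard_setOf_isFacetOf_Qplus4 : {F | IsFacetOf F Qplus4}.ncard = 32 := by
  have : {F | IsFacetOf F Qplus4} = Qface '' Wplus := by
    ext F
    refine ⟨fun hF => ?_, fun ⟨w, hw, hFw⟩ => hFw ▸ isFacetOf_Qface hw⟩
    obtain ⟨w, hw, rfl⟩ := exists_eq_Qface_of_isFacetOf hF
    exact ⟨w, hw, rfl⟩
  rw [this, Qface_injOn.ncard_image, ncard_Wplus]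

lemma exists_mem_SymGrp_image_Qface {w w' : Fin 4 → ℝ} (hw : w ∈ Wplus) (hw' : w' ∈ Wplus) :
    ∃ T ∈ SymGrp, T '' Qplus4 = Qplus4 ∧ T '' Qface w = Qface w' := by
  obtain ⟨s, sw, hs, rfl⟩ := exists_signedPerm_eq_of_mem_Wplus hw hw'
  exact ⟨_, signedPerm_mem_SymGrp hs sw, image_signedPerm_Qplus4 hs sw,
    image_signedPerm_Qface hs sw w⟩

end Facets

/-- `Q⁺` has exactly 32 facets, given by the inequalities
`±5x₁ ± x₂ ± 2x₃ ± x₄ ≤ 90` and `±x₁ ± 5x₂ ± x₃ ± 2x₄ ≤ 90`: each inequality is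
valid on `Q⁺` and holds with equality on a 3-dimensional face (a facet), `Q⁺`
is exactly the solution set of the 32 inequalities, and the symmetry group of
`Q⁺` acts transitively on these facets. -/
theorem stmt14 :
    (∀ w ∈ Wplus,
      (∀ x ∈ Qplus4, ∑ i, w i * x i ≤ 90) ∧
      adim {x ∈ Qplus4 | ∑ i, w i * x i = 90} = 3 ∧
      IsFacetOf {x ∈ Qplus4 | ∑ i, w i * x i = 90} Qplus4) ∧
    (∀ F, IsFacetOf F Qplus4 →
      ∃ w ∈ Wplus, F = {x ∈ Qplus4 | ∑ i, w i * x i = 90}) ∧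
    {F | IsFacetOf F Qplus4}.ncard = 32 ∧
    Qplus4 = {x | ∀ w ∈ Wplus, ∑ i, w i * x i ≤ 90} ∧
    (∀ w ∈ Wplus, ∀ w' ∈ Wplus, ∃ T ∈ SymGrp, T '' Qplus4 = Qplus4 ∧
      T '' {x ∈ Qplus4 | ∑ i, w i * x i = 90} =
        {x ∈ Qplus4 | ∑ i, w' i * x i = 90}) :=
  ⟨fun _ hw => ⟨fun _ hx => dotProduct_le_of_mem_Qplus4 hw hx, adim_Qface hw, isFacetOf_Qface hw⟩,
    fun _ hF => exists_eq_Qface_of_isFacetOf hF, ncard_setOf_isFacetOf_Qplus4, Qplus4_eq,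
    fun _ hw _ hw' => exists_mem_SymGrp_image_Qface hw hw'⟩
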